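/- arXiv:2411.07064 — 2 statements merged into one kernel-verified Lean document; each statement's English description precedes it below -/
import Mathlib

section
/- Let W(x,y) = exp(γ y² / (2σ²)) on 𝕋 × ℝ, and let L = y ∂_x - (κ sin x + γ y) ∂_y + (σ²/2) ∂²_y with κ, γ, σ > 0. Then L W(x,y) = (γ/(2σ²)) (−γ y² + σ² − 2κ y sin x) W(x,y), and in particular L W(x,y) ≤ −c W(x,y) + d for any c > 0, where d = sup over y in the set C = {y : (γ/(2σ²))(−γy² + σ² + 2κ|y|) + c > 0} of [(γ/(2σ²))(−γy² + σ² + 2κ|y|) + c] e^{γ y²/(2σ²)}. -/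
/-!
`W` does not depend on `x`, and `∂_y W = (γ y / σ²) W`, `∂²_y W = (γ / σ² + (γ y / σ²)²) W`, so the
diffusion term cancels half of the friction term `−γ y ∂_y W = −(γ² y² / σ²) W`; this gives the
formula for `L W`. Using `−y sin x ≤ |y|`, `L W + c W ≤ g(y) W`, where
`g(y) = (γ/(2σ²)) (−γ y² + σ² + 2κ|y|) + c` is a downward quadratic in `|y|`. Hence `g > 0` only on a
bounded set, where the continuous `g W` is bounded above, and `g W ≤ 0` off it.
-/

open Real Bornology

noncomputable def pendulumGenerator (κ γ σ : ℝ) (u : ℝ → ℝ → ℝ) (x y : ℝ) : ℝ :=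
  y * deriv (fun x' => u x' y) x - (κ * sin x + γ * y) * deriv (fun y' => u x y') y
    + σ ^ 2 / 2 * deriv (deriv (fun y' => u x y')) y

section GaussianDerivatives

variable (a b : ℝ)

theorem hasDerivAt_exp_mul_sq_div (y : ℝ) :
    HasDerivAt (fun y => exp (a * y ^ 2 / b)) (2 * a * y / b * exp (a * y ^ 2 / b)) y := by
  have h := (((hasDerivAt_pow 2 y).const_mul a).div_const b).exp
  convert h using 1
  push_cast
  ring

theorem deriv_exp_mul_sq_div :
    deriv (fun y => exp (a * y ^ 2 / b)) = fun y => 2 * a * y / b * exp (a * y ^ 2 / b) :=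
  funext fun y => (hasDerivAt_exp_mul_sq_div a b y).deriv

theorem deriv_deriv_exp_mul_sq_div (y : ℝ) :
    deriv (deriv (fun y => exp (a * y ^ 2 / b))) y
      = (2 * a / b + (2 * a * y / b) ^ 2) * exp (a * y ^ 2 / b) := by
  have hlin : HasDerivAt (fun y : ℝ => 2 * a * y / b) (2 * a / b) y := by
    simpa using ((hasDerivAt_id y).const_mul (2 * a)).div_const b
  rw [deriv_exp_mul_sq_div]
  exact (hlin.mul (hasDerivAt_exp_mul_sq_div a b y)).deriv.trans (by ring)

end GaussianDerivatives

theorem pendulumGenerator_exp_sq (κ γ σ x y : ℝ) :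
    pendulumGenerator κ γ σ (fun _ y => exp (γ * y ^ 2 / (2 * σ ^ 2))) x y
      = γ / (2 * σ ^ 2) * (-γ * y ^ 2 + σ ^ 2 - 2 * κ * y * sin x)
        * exp (γ * y ^ 2 / (2 * σ ^ 2)) := by
  rcases eq_or_ne σ 0 with rfl | hσ
  · simp [pendulumGenerator]
  simp only [pendulumGenerator, deriv_const]
  rw [deriv_deriv_exp_mul_sq_div, deriv_exp_mul_sq_div]
  field_simp
  ring

theorem neg_mul_mul_sin_le_mul_abs (k : ℝ) (hk : 0 ≤ k) (x y : ℝ) :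
    -(k * y * sin x) ≤ k * |y| := by
  have hsin : -(y * sin x) ≤ |y| := (neg_le_abs _).trans (by
    rw [abs_mul]; exact mul_le_of_le_one_right (abs_nonneg y) (abs_sin_le_one x))
  rw [mul_assoc, ← mul_neg]
  exact mul_le_mul_of_nonneg_left hsin hk

theorem le_max_of_neg_sq_add_pos {A B C u : ℝ} (hA : 0 < A) (hC : 0 ≤ C)
    (h : 0 < -A * u ^ 2 + B * u + C) : u ≤ max 1 ((B + C) / A) := by
  rcases lt_or_ge u 1 with hu | hu
  · exact le_max_of_le_left hu.le
  refine le_max_of_le_right ((le_div_iff₀ hA).2 ?_)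
  have hCu : C ≤ C * u := le_mul_of_one_le_right hC hu
  nlinarith

theorem isBounded_setOf_neg_sq_add_abs_pos {A B C : ℝ} (hA : 0 < A) (hC : 0 ≤ C) :
    IsBounded {y : ℝ | 0 < -A * y ^ 2 + B * |y| + C} := by
  refine (Metric.isBounded_closedBall (x := 0) (r := max 1 ((B + C) / A))).subset fun y hy => ?_
  rw [Metric.mem_closedBall, dist_zero_right, norm_eq_abs]
  refine le_max_of_neg_sq_add_pos hA hC ?_
  rwa [sq_abs]

theorem le_csSup_image_setOf_pos {α : Type*} [PseudoMetricSpace α] [ProperSpace α]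
    {g h : α → ℝ} (hg : Continuous g) (hh : Continuous h) (hh0 : ∀ y, 0 ≤ h y)
    (hS : IsBounded {y | 0 < g y}) (hne : {y | 0 < g y}.Nonempty) (y : α) :
    g y * h y ≤ sSup ((fun y => g y * h y) '' {y | 0 < g y}) := by
  have hbdd : BddAbove ((fun y => g y * h y) '' {y | 0 < g y}) :=
    (hS.isCompact_closure.image (hg.mul hh)).bddAbove.mono (Set.image_mono subset_closure)
  rcases lt_or_ge 0 (g y) with hy | hy
  · exact le_csSup hbdd ⟨y, hy, rfl⟩
  obtain ⟨y₀, hy₀⟩ := hne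
  calc g y * h y ≤ 0 := mul_nonpos_of_nonpos_of_nonneg hy (hh0 y)
    _ ≤ g y₀ * h y₀ := mul_nonneg (le_of_lt hy₀) (hh0 y₀)
    _ ≤ _ := le_csSup hbdd ⟨y₀, hy₀, rfl⟩

theorem stmt4 (κ γ σ : ℝ) (hκ : 0 < κ) (hγ : 0 < γ) (hσ : 0 < σ)
    (W : ℝ → ℝ → ℝ) (hW : W = fun _ y => Real.exp (γ * y ^ 2 / (2 * σ ^ 2)))
    (LW : ℝ → ℝ → ℝ)
    (hLW : LW = fun x y => y * deriv (fun x' => W x' y) x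
      - (κ * Real.sin x + γ * y) * deriv (fun y' => W x y') y
      + σ ^ 2 / 2 * deriv (deriv (fun y' => W x y')) y) :
    (∀ x y, LW x y = γ / (2 * σ ^ 2) * (-γ * y ^ 2 + σ ^ 2 - 2 * κ * y * Real.sin x) * W x y)
    ∧ ∀ c : ℝ, 0 < c →
      ∀ x y, LW x y ≤ -c * W x y +
        sSup ((fun y' => (γ / (2 * σ ^ 2) * (-γ * y' ^ 2 + σ ^ 2 + 2 * κ * |y'|) + c)
              * Real.exp (γ * y' ^ 2 / (2 * σ ^ 2))) ''
          {y' : ℝ | 0 < γ / (2 * σ ^ 2) * (-γ * y' ^ 2 + σ ^ 2 + 2 * κ * |y'|) + c}) := by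
  have hgen : ∀ x y, LW x y = γ / (2 * σ ^ 2) * (-γ * y ^ 2 + σ ^ 2 - 2 * κ * y * sin x) * W x y :=
    fun x y => by subst hW hLW; exact pendulumGenerator_exp_sq κ γ σ x y
  refine ⟨hgen, fun c hc x y => ?_⟩
  subst hW
  set a := γ / (2 * σ ^ 2)
  have ha : 0 < a := by positivity
  have hS : IsBounded {y' : ℝ | 0 < a * (-γ * y' ^ 2 + σ ^ 2 + 2 * κ * |y'|) + c} :=
    (isBounded_setOf_neg_sq_add_abs_pos (B := 2 * a * κ) (C := a * σ ^ 2 + c) (mul_pos ha hγ)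
      (by positivity)).subset fun y' hy' => by
        rw [Set.mem_ofPred_eq] at hy' ⊢
        linarith
  have hne : 0 ∈ {y' : ℝ | 0 < a * (-γ * y' ^ 2 + σ ^ 2 + 2 * κ * |y'|) + c} := by
    rw [Set.mem_ofPred_eq]
    norm_num
    positivity
  have hsup := le_csSup_image_setOf_pos (g := fun y => a * (-γ * y ^ 2 + σ ^ 2 + 2 * κ * |y|) + c)
    (h := fun y => exp (γ * y ^ 2 / (2 * σ ^ 2))) (by fun_prop) (by fun_prop)
    (fun y => (exp_pos _).le) hS ⟨0, hne⟩ y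
  have hdrift : a * (-γ * y ^ 2 + σ ^ 2 - 2 * κ * y * sin x)
      ≤ a * (-γ * y ^ 2 + σ ^ 2 + 2 * κ * |y|) := by
    gcongr
    linarith [neg_mul_mul_sin_le_mul_abs (2 * κ) (by positivity) x y]
  rw [hgen]
  linarith [mul_le_mul_of_nonneg_right hdrift (exp_pos (γ * y ^ 2 / (2 * σ ^ 2))).le]
end

section
/- For the pendulum projective vector fields X̃₀(x,y,θ) = (y, −γy − κ sin x, −γ sin θ + cos θ − κ cos x (cos θ + 1) − 1) and X̃₂ = (0, σ, 0), the iterated Lie bracket [[X̃₂, X̃₀], X̃₀] equals (−γσ, σ(γ² − κ cos x), κσ sin x (cos θ + 1)). -/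
/-! A bracket `[c, V]` with a constant field `c` is the directional derivative `DV · c`.
Since `X̃₂ = σ ∂_y` is constant, `[X̃₂, X̃₀] = σ ∂_y X̃₀ = (σ, -γσ, 0)` is constant again, so
`[[X̃₂, X̃₀], X̃₀] = DX̃₀ · (σ, -γσ, 0)`. -/

/-- Lie bracket of vector fields on ℝ³ (identified with ℝ × ℝ × ℝ):
`[U, V](p) = DV(p) U(p) − DU(p) V(p)`. -/
noncomputable def lieBracket (U V : ℝ × ℝ × ℝ → ℝ × ℝ × ℝ) : ℝ × ℝ × ℝ → ℝ × ℝ × ℝ :=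
  fun p => fderiv ℝ V p (U p) - fderiv ℝ U p (V p)

theorem lieBracket_const_left (c : ℝ × ℝ × ℝ) (V : ℝ × ℝ × ℝ → ℝ × ℝ × ℝ) (p : ℝ × ℝ × ℝ) :
    lieBracket (fun _ => c) V p = fderiv ℝ V p c := by
  simp [lieBracket]

noncomputable def pendulumDrift (κ γ : ℝ) (p : ℝ × ℝ × ℝ) : ℝ × ℝ × ℝ :=
  (p.2.1, -γ * p.2.1 - κ * Real.sin p.1,
    -γ * Real.sin p.2.2 + Real.cos p.2.2 - κ * Real.cos p.1 * (Real.cos p.2.2 + 1) - 1)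

theorem fderiv_pendulumDrift_apply (κ γ : ℝ) (p v : ℝ × ℝ × ℝ) :
    fderiv ℝ (pendulumDrift κ γ) p v =
      (v.2.1, -γ * v.2.1 - κ * Real.cos p.1 * v.1,
        (κ * Real.cos p.1 * Real.sin p.2.2 - γ * Real.cos p.2.2 - Real.sin p.2.2) * v.2.2
          + κ * Real.sin p.1 * (Real.cos p.2.2 + 1) * v.1) := by
  have hx := hasFDerivAt_fst (𝕜 := ℝ) (p := p)
  have hy := (hasFDerivAt_snd (𝕜 := ℝ) (p := p)).fst
  have hθ := (hasFDerivAt_snd (𝕜 := ℝ) (p := p)).snd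
  have h : HasFDerivAt (pendulumDrift κ γ) _ p :=
    hy.prodMk (((hy.const_mul (-γ)).sub (hx.sin.const_mul κ)).prodMk
      ((((hθ.sin.const_mul (-γ)).add hθ.cos).sub
        ((hx.cos.const_mul κ).mul (hθ.cos.add_const 1))).sub_const 1))
  rw [h.fderiv]
  ext <;> simp only [ContinuousLinearMap.prod_apply, ContinuousLinearMap.comp_apply,
    ContinuousLinearMap.coe_snd', ContinuousLinearMap.coe_fst', sub_apply, add_apply,
    smul_apply, smul_eq_mul] <;> ring

theorem stmt6 (κ γ σ : ℝ)
    (X0 : ℝ × ℝ × ℝ → ℝ × ℝ × ℝ)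
    (hX0 : X0 = fun p => (p.2.1, -γ * p.2.1 - κ * Real.sin p.1,
      -γ * Real.sin p.2.2 + Real.cos p.2.2 - κ * Real.cos p.1 * (Real.cos p.2.2 + 1) - 1))
    (X2 : ℝ × ℝ × ℝ → ℝ × ℝ × ℝ) (hX2 : X2 = fun _ => (0, σ, 0)) :
    ∀ p : ℝ × ℝ × ℝ, lieBracket (lieBracket X2 X0) X0 p
      = (-γ * σ, σ * (γ ^ 2 - κ * Real.cos p.1),
          κ * σ * Real.sin p.1 * (Real.cos p.2.2 + 1)) := by
  obtain rfl : X0 = pendulumDrift κ γ := hX0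
  subst hX2
  have h_inner :
      lieBracket (fun _ => (0, σ, 0)) (pendulumDrift κ γ) = fun _ => (σ, -γ * σ, 0) := by
    funext p
    rw [lieBracket_const_left, fderiv_pendulumDrift_apply]
    simp
  intro p
  rw [h_inner, lieBracket_const_left, fderiv_pendulumDrift_apply]
  ext <;> dsimp only <;> ring
end
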